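/- Define r₁(λ, r) := (i/(2λ)) (e^{iλr} − 1 − iλr) for λ > 0 and r ≥ 0 (this is the remainder in the expansion (±i/(2λ)) e^{±iλr} = (±i)/(2λ) − r/2 + r₁^{±}(λ, r) of the one-dimensional free resolvent kernel). Then there exist absolute constants C₀, C₁ > 0 such that for every 0 < λ < 1, every r ≥ 0 and k ∈ {0, 1}: |∂_λ^k r₁(λ, r)| ≤ C_k λ^{1/2 − k} r^{3/2}. -/

import Mathlib

/-!
With `x = λ r`, `r₁ = (i/(2λ)) (e^{ix} - 1 - ix)` and
`∂_λ r₁ = -(i/(2λ²)) (e^{ix} - 1 - ix) - (r/(2λ)) (e^{ix} - 1)`. Both estimates therefore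
reduce to `‖e^{ix} - 1 - ix‖ ≤ 2 x^{3/2}` and `‖e^{ix} - 1‖ ≤ (2x)^{1/2}`, each obtained by
interpolating between the Taylor bound near `0` (`x²`, resp. `x`) and the crude bound far from it
(`2x`, resp. `2`). Writing `λ = s²` makes the remaining bookkeeping polynomial in `s`.
-/

open Set Complex

theorem le_sqrt_mul_of_le_of_le {a b c : ℝ} (hc : 0 ≤ c) (ha : c ≤ a) (hb : c ≤ b) :
    c ≤ √(a * b) :=
  Real.le_sqrt_of_sq_le (by nlinarith)

theorem norm_exp_I_mul_ofReal_sub_one_le_sqrt (x : ℝ) :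
    ‖exp (I * x) - 1‖ ≤ √(|x| * 2) := by
  refine le_sqrt_mul_of_le_of_le (norm_nonneg _) Real.norm_exp_I_mul_ofReal_sub_one_le ?_
  calc ‖exp (I * x) - 1‖ ≤ ‖exp (I * x)‖ + ‖(1 : ℂ)‖ := norm_sub_le _ _
    _ = 2 := by rw [norm_exp_I_mul_ofReal, norm_one]; norm_num

theorem norm_exp_I_mul_ofReal_sub_one_sub_le (x : ℝ) :
    ‖exp (I * x) - 1 - I * x‖ ≤ 2 * |x| :=
  calc ‖exp (I * x) - 1 - I * x‖ ≤ ‖exp (I * x) - 1‖ + ‖I * x‖ := norm_sub_le _ _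
    _ ≤ |x| + |x| := by
      gcongr
      · exact Real.norm_exp_I_mul_ofReal_sub_one_le
      · simp
    _ = 2 * |x| := by ring

theorem norm_exp_I_mul_ofReal_sub_one_sub_le_mul_sqrt (x : ℝ) :
    ‖exp (I * x) - 1 - I * x‖ ≤ 2 * |x| * √|x| := by
  rcases le_total |x| 1 with hx | hx
  · have hsq : ‖exp (I * x) - 1 - I * x‖ ≤ |x| * |x| := by
      simpa [sq] using norm_exp_sub_one_sub_id_le (x := I * x) (by simpa using hx)
    have : |x| ≤ √|x| := Real.le_sqrt_of_sq_le (by nlinarith [abs_nonneg x])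
    nlinarith [abs_nonneg x]
  · have : 1 ≤ √|x| := Real.one_le_sqrt.mpr hx
    nlinarith [norm_exp_I_mul_ofReal_sub_one_sub_le x, abs_nonneg x]

noncomputable def resolventRemainder (l r : ℝ) : ℂ :=
  I / (2 * l) * (exp (I * l * r) - 1 - I * l * r)

theorem hasDerivAt_resolventRemainder (r : ℝ) {l : ℝ} (hl : l ≠ 0) :
    HasDerivAt (resolventRemainder · r)
      (-I / (2 * l ^ 2) * (exp (I * l * r) - 1 - I * l * r) - r / (2 * l) * (exp (I * l * r) - 1))
      l := by
  have hlin : HasDerivAt (fun z : ℂ => I * z * r) (I * r) l := by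
    simpa using ((hasDerivAt_id (l : ℂ)).const_mul I).mul_const (r : ℂ)
  have hfactor : HasDerivAt (fun z : ℂ => I / (2 * z)) (-(I * 2) / (2 * l) ^ 2) l := by
    simpa using (hasDerivAt_const (l : ℂ) I).fun_div ((hasDerivAt_id (l : ℂ)).const_mul 2)
      (by simpa using hl)
  have hz : HasDerivAt (fun z : ℂ => I / (2 * z) * (exp (I * z * r) - 1 - I * z * r))
      (-(I * 2) / (2 * l) ^ 2 * (exp (I * l * r) - 1 - I * l * r)
        + I / (2 * l) * (exp (I * l * r) * (I * r) - I * r)) l :=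
    hfactor.mul ((hlin.cexp.sub_const 1).sub hlin)
  refine (hz.congr_deriv ?_).comp_ofReal
  have hl' : (l : ℂ) ≠ 0 := ofReal_ne_zero.mpr hl
  field_simp
  ring_nf
  simp only [I_sq]
  ring

theorem I_mul_ofReal_mul_ofReal (l r : ℝ) : I * l * r = I * ((l * r : ℝ) : ℂ) := by
  push_cast; ring

theorem norm_resolventRemainder_le {l r : ℝ} (hl : 0 < l) (hr : 0 ≤ r) :
    ‖resolventRemainder l r‖ ≤ √l * (r * √r) := by
  obtain ⟨s, hs, rfl⟩ : ∃ s, 0 < s ∧ l = s ^ 2 :=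
    ⟨√l, Real.sqrt_pos.2 hl, (Real.sq_sqrt hl.le).symm⟩
  have hA := norm_exp_I_mul_ofReal_sub_one_sub_le_mul_sqrt (s ^ 2 * r)
  rw [abs_of_nonneg (by positivity), Real.sqrt_mul (by positivity), Real.sqrt_sq hs.le] at hA
  have hfactor : ‖I / (2 * ((s ^ 2 : ℝ) : ℂ))‖ = 1 / (2 * s ^ 2) := by
    simp [abs_of_pos hs]
  rw [resolventRemainder, I_mul_ofReal_mul_ofReal, norm_mul, hfactor, Real.sqrt_sq hs.le]
  calc _ ≤ 1 / (2 * s ^ 2) * (2 * (s ^ 2 * r) * (s * √r)) := by gcongr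
    _ = s * (r * √r) := by field_simp

theorem norm_deriv_resolventRemainder_le {l r : ℝ} (hl : 0 < l) (hr : 0 ≤ r) :
    ‖deriv (resolventRemainder · r) l‖ ≤ 2 * (r * √r) / √l := by
  rw [(hasDerivAt_resolventRemainder r hl.ne').deriv]
  obtain ⟨s, hs, rfl⟩ : ∃ s, 0 < s ∧ l = s ^ 2 :=
    ⟨√l, Real.sqrt_pos.2 hl, (Real.sq_sqrt hl.le).symm⟩
  have hx : 0 ≤ s ^ 2 * r := by positivity
  have hA := norm_exp_I_mul_ofReal_sub_one_sub_le_mul_sqrt (s ^ 2 * r)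
  have hB := norm_exp_I_mul_ofReal_sub_one_le_sqrt (s ^ 2 * r)
  rw [abs_of_nonneg hx, Real.sqrt_mul (sq_nonneg s), Real.sqrt_sq hs.le] at hA
  rw [abs_of_nonneg hx, Real.sqrt_mul hx, Real.sqrt_mul (sq_nonneg s), Real.sqrt_sq hs.le] at hB
  rw [I_mul_ofReal_mul_ofReal, Real.sqrt_sq hs.le]
  have hcoef₁ : ‖-I / (2 * ((s ^ 2 : ℝ) : ℂ) ^ 2)‖ = 1 / (2 * s ^ 4) := by
    simp [abs_of_pos hs]; ring
  have hcoef₂ : ‖(r : ℂ) / (2 * ((s ^ 2 : ℝ) : ℂ))‖ = r / (2 * s ^ 2) := by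
    simp [abs_of_pos hs, abs_of_nonneg hr]
  calc _ ≤ 1 / (2 * s ^ 4) * (2 * (s ^ 2 * r) * (s * √r))
        + r / (2 * s ^ 2) * (s * √r * √2) := by
        grw [norm_sub_le, norm_mul, norm_mul, hcoef₁, hcoef₂, hA, hB]
    _ = r * √r / s * (1 + √2 / 2) := by field_simp
    _ ≤ r * √r / s * 2 := by gcongr; linarith [Real.sqrt_two_lt_three_halves]
    _ = 2 * (r * √r) / s := by ring

theorem Real.rpow_three_halves {r : ℝ} (hr : 0 ≤ r) : r ^ ((3 : ℝ) / 2) = r * √r := by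
  rw [Real.sqrt_eq_rpow, show (3 : ℝ) / 2 = 1 + 1 / 2 by norm_num,
    Real.rpow_add' hr (by norm_num), Real.rpow_one]

theorem Real.rpow_neg_one_half {l : ℝ} (hl : 0 ≤ l) : l ^ (-(1 : ℝ) / 2) = (√l)⁻¹ := by
  rw [Real.sqrt_eq_rpow, neg_div, Real.rpow_neg hl]

theorem resolvent_remainder_estimate_d1 :
    ∃ C₀ > 0, ∃ C₁ > 0, ∀ lam ∈ Ioo (0:ℝ) 1, ∀ r : ℝ, 0 ≤ r →
      ‖(Complex.I / (2 * (lam : ℂ))) *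
          (Complex.exp (Complex.I * (lam : ℂ) * (r : ℂ)) - 1 -
            Complex.I * (lam : ℂ) * (r : ℂ))‖
        ≤ C₀ * lam ^ ((1:ℝ)/2) * r ^ ((3:ℝ)/2) ∧
      ‖deriv (fun l : ℝ => (Complex.I / (2 * (l : ℂ))) *
          (Complex.exp (Complex.I * (l : ℂ) * (r : ℂ)) - 1 -
            Complex.I * (l : ℂ) * (r : ℂ))) lam‖
        ≤ C₁ * lam ^ (-(1:ℝ)/2) * r ^ ((3:ℝ)/2) := by
  refine ⟨1, one_pos, 2, two_pos, fun lam ⟨hlam, _⟩ r hr => ⟨?_, ?_⟩⟩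
  · rw [← Real.sqrt_eq_rpow, Real.rpow_three_halves hr, one_mul]
    exact norm_resolventRemainder_le hlam hr
  · rw [Real.rpow_neg_one_half hlam.le, Real.rpow_three_halves hr, mul_right_comm,
      ← div_eq_mul_inv]
    exact norm_deriv_resolventRemainder_le hlam hr
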